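/- arXiv:2301.04849 — 11 statements merged into one kernel-verified Lean document; each statement's English description precedes it below -/
import Mathlib

section
/- The point K₁ = (1, 0, 0) (the monomorphic altruistic-punisher state) is an equilibrium of F, and charpoly(J(K₁)) = X · (X − (b − β − 1)) · (X − (ε − 1)); in particular, if b > 1 + β then J(K₁) has the positive real eigenvalue b − β − 1, so K₁ is linearly unstable. -/
noncomputable section

open Polynomial

/-- Payoff of altruistic punishers. -/
def PiAP (γ x y z : ℝ) : ℝ := x + y - γ * z

/-- Payoff of non-punishing cooperators. -/
def PiNC (x y : ℝ) : ℝ := x + y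

/-- Payoff of defectors. -/
def PiD (b β x y : ℝ) : ℝ := (b - β) * x + b * y

/-- First component of the reduced replicator vector field. -/
def fRep (b β γ ε x y z : ℝ) : ℝ :=
  x * ((1 - x) * (PiAP γ x y z - ε) - y * (PiNC x y - ε) - z * (PiD b β x y - ε))

/-- Second component of the reduced replicator vector field. -/
def gRep (b β γ ε x y z : ℝ) : ℝ :=
  y * ((1 - y) * (PiNC x y - ε) - x * (PiAP γ x y z - ε) - z * (PiD b β x y - ε))

/-- Third component of the reduced replicator vector field. -/
def hRep (b β γ ε x y z : ℝ) : ℝ :=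
  z * ((1 - z) * (PiD b β x y - ε) - y * (PiNC x y - ε) - x * (PiAP γ x y z - ε))

/-- The reduced replicator vector field `F : ℝ³ → ℝ³`. -/
def Fv (b β γ ε : ℝ) (p : ℝ × ℝ × ℝ) : ℝ × ℝ × ℝ :=
  (fRep b β γ ε p.1 p.2.1 p.2.2,
   gRep b β γ ε p.1 p.2.1 p.2.2,
   hRep b β γ ε p.1 p.2.1 p.2.2)

/-- Partial derivative in the first variable. -/
def pd1 (F : ℝ → ℝ → ℝ → ℝ) (p : ℝ × ℝ × ℝ) : ℝ :=
  deriv (fun x => F x p.2.1 p.2.2) p.1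

/-- Partial derivative in the second variable. -/
def pd2 (F : ℝ → ℝ → ℝ → ℝ) (p : ℝ × ℝ × ℝ) : ℝ :=
  deriv (fun y => F p.1 y p.2.2) p.2.1

/-- Partial derivative in the third variable. -/
def pd3 (F : ℝ → ℝ → ℝ → ℝ) (p : ℝ × ℝ × ℝ) : ℝ :=
  deriv (fun z => F p.1 p.2.1 z) p.2.2

/-- The Jacobian matrix of the reduced replicator vector field at `p`. -/
def Jac (b β γ ε : ℝ) (p : ℝ × ℝ × ℝ) : Matrix (Fin 3) (Fin 3) ℝ :=
  !![pd1 (fRep b β γ ε) p, pd2 (fRep b β γ ε) p, pd3 (fRep b β γ ε) p;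
     pd1 (gRep b β γ ε) p, pd2 (gRep b β γ ε) p, pd3 (gRep b β γ ε) p;
     pd1 (hRep b β γ ε) p, pd2 (hRep b β γ ε) p, pd3 (hRep b β γ ε) p]

/-!
Each component of `F` is its own coordinate times a polynomial factor, so at a vertex of the
simplex the derivative of a component along its own axis is that factor evaluated at the vertex
(`deriv_sub_mul_self`), while the other partial derivatives of the second and third components
vanish because `y = z = 0` on the corresponding lines through `K₁`. Hence `J(K₁)` is upper
triangular and its characteristic polynomial is the product over its diagonal
`ε - 1, 0, b - β - 1`.
-/

theorem deriv_sub_mul_self {u : ℝ → ℝ} {a : ℝ} (hu : DifferentiableAt ℝ u a) :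
    deriv (fun t => (t - a) * u t) a = u a := by
  rw [(((hasDerivAt_id' a).sub_const a).fun_mul hu.hasDerivAt).deriv]
  simp

theorem deriv_mul_self_zero {u : ℝ → ℝ} (hu : DifferentiableAt ℝ u 0) :
    deriv (fun t => t * u t) 0 = u 0 := by
  simpa using deriv_sub_mul_self hu

section Jacobian

variable (b β γ ε : ℝ)

theorem Fv_one_zero_zero : Fv b β γ ε (1, 0, 0) = (0, 0, 0) := by
  simp [Fv, fRep, gRep, hRep, PiAP, PiNC, PiD]

theorem Jac_one_zero_zero : Jac b β γ ε (1, 0, 0) =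
    !![ε - 1, ε - 1, ε - b + β; 0, 0, 0; 0, 0, b - β - 1] := by
  have f_x : pd1 (fRep b β γ ε) (1, 0, 0) = ε - 1 := by
    calc pd1 (fRep b β γ ε) (1, 0, 0) = deriv (fun x => (x - 1) * (-(x * (x - ε)))) 1 := by
          simp only [pd1, fRep, PiAP, PiNC, PiD]; congr; funext x; ring
      _ = ε - 1 := by rw [deriv_sub_mul_self (by fun_prop)]; ring
  have f_y : pd2 (fRep b β γ ε) (1, 0, 0) = ε - 1 := by
    calc pd2 (fRep b β γ ε) (1, 0, 0) = deriv (fun y => y * (ε - 1 - y)) 0 := by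
          simp only [pd2, fRep, PiAP, PiNC, PiD]; congr; funext y; ring
      _ = ε - 1 := by rw [deriv_mul_self_zero (by fun_prop)]; ring
  have f_z : pd3 (fRep b β γ ε) (1, 0, 0) = ε - b + β := by
    calc pd3 (fRep b β γ ε) (1, 0, 0) = deriv (fun z => z * (ε - b + β)) 0 := by
          simp only [pd3, fRep, PiAP, PiNC, PiD]; congr; funext z; ring
      _ = ε - b + β := deriv_mul_self_zero (by fun_prop)
  have g_y : pd2 (gRep b β γ ε) (1, 0, 0) = 0 := by
    calc pd2 (gRep b β γ ε) (1, 0, 0) = deriv (fun y => y * (-y * (1 + y - ε))) 0 := by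
          simp only [pd2, gRep, PiAP, PiNC, PiD]; congr; funext y; ring
      _ = 0 := by rw [deriv_mul_self_zero (by fun_prop)]; ring
  have h_z : pd3 (hRep b β γ ε) (1, 0, 0) = b - β - 1 := by
    calc pd3 (hRep b β γ ε) (1, 0, 0)
          = deriv (fun z => z * ((1 - z) * (b - β - ε) - (1 - γ * z - ε))) 0 := by
          simp only [pd3, hRep, PiAP, PiNC, PiD]; congr; funext z; ring
      _ = b - β - 1 := by rw [deriv_mul_self_zero (by fun_prop)]; ring
  rw [Jac, f_x, f_y, f_z, g_y, h_z]
  simp [pd1, pd2, pd3, gRep, hRep]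

theorem charpoly_Jac_one_zero_zero :
    (Jac b β γ ε (1, 0, 0)).charpoly = X * (X - C (b - β - 1)) * (X - C (ε - 1)) := by
  have upper : (!![ε - 1, ε - 1, ε - b + β; 0, 0, 0; 0, 0, b - β - 1]).IsUpperTriangular := by
    intro i j hji
    fin_cases i <;> fin_cases j <;> simp_all
  rw [Jac_one_zero_zero, Matrix.charpoly_of_isUpperTriangular _ upper, Fin.prod_univ_three]
  simp only [Matrix.of_apply, Matrix.cons_val, map_zero, sub_zero]
  ring

end Jacobian

theorem K1_equilibrium_charpoly_unstable_general (b β γ ε : ℝ) :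
    Fv b β γ ε (1, 0, 0) = (0, 0, 0) ∧
    (Jac b β γ ε (1, 0, 0)).charpoly =
      X * (X - C (b - β - 1)) * (X - C (ε - 1)) ∧
    (1 + β < b →
      0 < b - β - 1 ∧ ((Jac b β γ ε (1, 0, 0)).charpoly).IsRoot (b - β - 1)) :=
  ⟨Fv_one_zero_zero b β γ ε, charpoly_Jac_one_zero_zero b β γ ε,
    fun hb => ⟨by linarith, by simp [charpoly_Jac_one_zero_zero]⟩⟩

/-- the monomorphic altruistic-punisher state `K₁ = (1,0,0)`. -/
theorem K1_equilibrium_charpoly_unstable (b β γ ε : ℝ)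
    (hb : 1 < b) (hβ : 0 < β) (hγ : 0 < γ) (hε : ε < 1) :
    Fv b β γ ε (1, 0, 0) = (0, 0, 0) ∧
    (Jac b β γ ε (1, 0, 0)).charpoly =
      X * (X - C (b - β - 1)) * (X - C (ε - 1)) ∧
    (1 + β < b →
      0 < b - β - 1 ∧ ((Jac b β γ ε (1, 0, 0)).charpoly).IsRoot (b - β - 1)) :=
  K1_equilibrium_charpoly_unstable_general b β γ ε
end
end

section
/- The point K₂ = (0, 1, 0) (the monomorphic non-punishing-cooperator state) is an equilibrium of F, and charpoly(J(K₂)) = X · (X − (b − 1)) · (X − (ε − 1)); since b > 1, J(K₂) has the positive real eigenvalue b − 1, so K₂ is linearly unstable. -/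
noncomputable section

open Polynomial

lemma deriv_cubic (a₃ a₂ a₁ a₀ x : ℝ) :
    deriv (fun t : ℝ => a₃ * t ^ 3 + a₂ * t ^ 2 + a₁ * t + a₀) x
      = 3 * a₃ * x ^ 2 + 2 * a₂ * x + a₁ := by
  have h : HasDerivAt (fun t : ℝ => a₃ * t ^ 3 + a₂ * t ^ 2 + a₁ * t + a₀)
      (a₃ * (↑3 * x ^ 2) + a₂ * (↑2 * x ^ 1) + a₁ * 1 + 0) x := by
    exact ((((hasDerivAt_pow 3 x).const_mul a₃).add
      ((hasDerivAt_pow 2 x).const_mul a₂)).add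
      ((hasDerivAt_id x).const_mul a₁)).add (hasDerivAt_const x a₀)
  rw [h.deriv]; push_cast; ring

lemma Jac_K2 (b β γ ε : ℝ) :
    Jac b β γ ε (0, 1, 0) = !![0, 0, 0; ε - 1, ε - 1, ε - b; 0, 0, b - 1] := by
  have e1 : pd1 (fRep b β γ ε) (0, 1, 0) = 0 := by
    unfold pd1
    have : (fun x => fRep b β γ ε x 1 0)
        = fun x : ℝ => (-1) * x ^ 3 + (ε - 1) * x ^ 2 + 0 * x + 0 := by
      funext x; simp only [fRep, PiAP, PiNC, PiD]; ring
    rw [this, deriv_cubic]; norm_num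
  have e2 : pd2 (fRep b β γ ε) (0, 1, 0) = 0 := by
    unfold pd2
    have : (fun y => fRep b β γ ε 0 y 0)
        = fun y : ℝ => 0 * y ^ 3 + 0 * y ^ 2 + 0 * y + 0 := by
      funext y; simp only [fRep, PiAP, PiNC, PiD]; ring
    rw [this, deriv_cubic]; norm_num
  have e3 : pd3 (fRep b β γ ε) (0, 1, 0) = 0 := by
    unfold pd3
    have : (fun z => fRep b β γ ε 0 1 z)
        = fun z : ℝ => 0 * z ^ 3 + 0 * z ^ 2 + 0 * z + 0 := by
      funext z; simp only [fRep, PiAP, PiNC, PiD]; ring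
    rw [this, deriv_cubic]; norm_num
  have e4 : pd1 (gRep b β γ ε) (0, 1, 0) = ε - 1 := by
    unfold pd1
    have : (fun x => gRep b β γ ε x 1 0)
        = fun x : ℝ => 0 * x ^ 3 + (-1) * x ^ 2 + (ε - 1) * x + 0 := by
      funext x; simp only [gRep, PiAP, PiNC, PiD]; ring
    rw [this, deriv_cubic]; norm_num
  have e5 : pd2 (gRep b β γ ε) (0, 1, 0) = ε - 1 := by
    unfold pd2
    have : (fun y => gRep b β γ ε 0 y 0)
        = fun y : ℝ => (-1) * y ^ 3 + (1 + ε) * y ^ 2 + (-ε) * y + 0 := by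
      funext y; simp only [gRep, PiAP, PiNC, PiD]; ring
    rw [this, deriv_cubic]; ring
  have e6 : pd3 (gRep b β γ ε) (0, 1, 0) = ε - b := by
    unfold pd3
    have : (fun z => gRep b β γ ε 0 1 z)
        = fun z : ℝ => 0 * z ^ 3 + 0 * z ^ 2 + (ε - b) * z + 0 := by
      funext z; simp only [gRep, PiAP, PiNC, PiD]; ring
    rw [this, deriv_cubic]; ring
  have e7 : pd1 (hRep b β γ ε) (0, 1, 0) = 0 := by
    unfold pd1
    have : (fun x => hRep b β γ ε x 1 0)
        = fun x : ℝ => 0 * x ^ 3 + 0 * x ^ 2 + 0 * x + 0 := by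
      funext x; simp only [hRep, PiAP, PiNC, PiD]; ring
    rw [this, deriv_cubic]; norm_num
  have e8 : pd2 (hRep b β γ ε) (0, 1, 0) = 0 := by
    unfold pd2
    have : (fun y => hRep b β γ ε 0 y 0)
        = fun y : ℝ => 0 * y ^ 3 + 0 * y ^ 2 + 0 * y + 0 := by
      funext y; simp only [hRep, PiAP, PiNC, PiD]; ring
    rw [this, deriv_cubic]; norm_num
  have e9 : pd3 (hRep b β γ ε) (0, 1, 0) = b - 1 := by
    unfold pd3
    have : (fun z => hRep b β γ ε 0 1 z)
        = fun z : ℝ => 0 * z ^ 3 + (ε - b) * z ^ 2 + (b - 1) * z + 0 := by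
      funext z; simp only [hRep, PiAP, PiNC, PiD]; ring
    rw [this, deriv_cubic]; ring
  unfold Jac
  rw [e1, e2, e3, e4, e5, e6, e7, e8, e9]

/-- the monomorphic non-punishing-cooperator state `K₂ = (0,1,0)`. -/
theorem K2_equilibrium_charpoly_unstable (b β γ ε : ℝ)
    (hb : 1 < b) (hβ : 0 < β) (hγ : 0 < γ) (hε : ε < 1) :
    Fv b β γ ε (0, 1, 0) = (0, 0, 0) ∧
    (Jac b β γ ε (0, 1, 0)).charpoly =
      X * (X - C (b - 1)) * (X - C (ε - 1)) ∧
    0 < b - 1 ∧ ((Jac b β γ ε (0, 1, 0)).charpoly).IsRoot (b - 1) := by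
  have hcp : (Jac b β γ ε (0, 1, 0)).charpoly =
      X * (X - C (b - 1)) * (X - C (ε - 1)) := by
    rw [Jac_K2, Matrix.charpoly, Matrix.det_fin_three]
    simp [Matrix.charmatrix_apply, Matrix.diagonal]
    ring
  refine ⟨?_, hcp, by linarith, ?_⟩
  · simp only [Fv, fRep, gRep, hRep, PiAP, PiNC, PiD]
    norm_num
  · rw [hcp]
    simp [Polynomial.IsRoot, sub_self]
end
end

section
/- The point K₃ = (0, 0, 1) (the monomorphic defector state) is an equilibrium of F, and charpoly(J(K₃)) = X · (X − ε) · (X + γ); in particular, if ε > 0 then J(K₃) has the positive real eigenvalue ε, so K₃ is linearly unstable. -/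
noncomputable section

open Polynomial

/-! At `K₃ = (0, 0, 1)` the factors `x` of `f` and `y` of `g` vanish, so the first two rows of
`J(K₃)` have nothing to the right of the diagonal: `J(K₃)` is lower triangular with diagonal
`-γ, 0, ε`, and these are its eigenvalues. -/

theorem Matrix.charpoly_of_isLowerTriangular {n R : Type*} [Fintype n] [DecidableEq n]
    [LinearOrder n] [CommRing R] (M : Matrix n n R) (h : M.IsLowerTriangular) :
    M.charpoly = ∏ i : n, (X - C (M i i)) := by
  rw [← Matrix.charpoly_transpose]
  exact Matrix.charpoly_of_isUpperTriangular _ h.transpose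

section K3

variable (b β γ ε : ℝ)

theorem Fv_K3 : Fv b β γ ε (0, 0, 1) = (0, 0, 0) := by
  simp [Fv, fRep, gRep, hRep]

theorem Jac_K3 : Jac b β γ ε (0, 0, 1) = !![-γ, 0, 0; 0, 0, 0; γ + ε, ε, ε] := by
  simp (disch := fun_prop) [Jac, pd1, pd2, pd3, fRep, gRep, hRep, PiAP, PiNC, PiD,
    deriv_fun_mul]
  ring

theorem charpoly_Jac_K3 : (Jac b β γ ε (0, 0, 1)).charpoly = X * (X - C ε) * (X + C γ) := by
  have hlower :
      (!![-γ, 0, 0; 0, 0, 0; γ + ε, ε, ε] : Matrix (Fin 3) (Fin 3) ℝ).IsLowerTriangular := by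
    intro i j hij
    fin_cases i <;> fin_cases j <;> first | rfl | exact absurd hij (by decide)
  rw [Jac_K3, Matrix.charpoly_of_isLowerTriangular _ hlower]
  simp [Fin.prod_univ_three]
  ring

end K3

theorem K3_equilibrium_charpoly_unstable_general (b β γ ε : ℝ) :
    Fv b β γ ε (0, 0, 1) = (0, 0, 0) ∧
    (Jac b β γ ε (0, 0, 1)).charpoly =
      X * (X - C ε) * (X + C γ) ∧
    (0 < ε →
      0 < ε ∧ ((Jac b β γ ε (0, 0, 1)).charpoly).IsRoot ε) := by
  refine ⟨Fv_K3 b β γ ε, charpoly_Jac_K3 b β γ ε, fun hε => ⟨hε, ?_⟩⟩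
  simp [charpoly_Jac_K3]

/-- the monomorphic defector state `K₃ = (0,0,1)`. -/
theorem K3_equilibrium_charpoly_unstable (b β γ ε : ℝ)
    (hb : 1 < b) (hβ : 0 < β) (hγ : 0 < γ) (hε : ε < 1) :
    Fv b β γ ε (0, 0, 1) = (0, 0, 0) ∧
    (Jac b β γ ε (0, 0, 1)).charpoly =
      X * (X - C ε) * (X + C γ) ∧
    (0 < ε →
      0 < ε ∧ ((Jac b β γ ε (0, 0, 1)).charpoly).IsRoot ε) :=
  K3_equilibrium_charpoly_unstable_general b β γ ε
end
end

section
/- Suppose 0 < ε < 1. Then the origin (0,0,0) (the monomorphic exiter equilibrium) is locally asymptotically stable for the reduced replicator system: there exists δ > 0 such that every differentiable curve u : [0, ∞) → ℝ³ satisfying u′(t) = F(u(t)) for all t ≥ 0 and ‖u(0)‖ < δ converges to (0,0,0) as t → ∞. -/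
noncomputable section

open Polynomial

/-!
Near the origin the reduced replicator field is `F p = p * ρ p` (componentwise product), where the
per-capita growth rate `ρ` is continuous with `ρ 0 = (-ε, -ε, -ε)`; so the linearisation at `0` is
`-ε • id`. On a small closed ball every component of `ρ` is at most `-ε/2`, hence the squared
Euclidean norm `V` decreases along trajectories at rate `V' ≤ -ε V`. A trajectory starting well inside
the ball cannot reach the sphere where this estimate stops holding (there `V' < 0`), and Grönwall's
inequality then gives `V (u t) ≤ V (u 0) e^{-ε t} → 0`.
-/

open Real Filter Topology Set

theorem le_of_deriv_neg_of_eq {φ φ' : ℝ → ℝ} {R : ℝ}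
    (hφ : ∀ t, 0 ≤ t → HasDerivAt φ (φ' t) t) (h0 : φ 0 ≤ R)
    (hR : ∀ t, 0 ≤ t → φ t = R → φ' t < 0) {t : ℝ} (ht : 0 ≤ t) : φ t ≤ R :=
  image_le_of_deriv_right_lt_deriv_boundary' (a := 0) (b := t) (B := fun _ => R) (B' := 0)
    (fun s hs => (hφ s hs.1).continuousAt.continuousWithinAt)
    (fun s hs => (hφ s hs.1).hasDerivWithinAt) h0 continuousOn_const
    (fun _ _ => hasDerivWithinAt_const _ _ _) (fun s hs => hR s hs.1) ⟨ht, le_rfl⟩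

theorem le_mul_exp_of_deriv_le_neg_mul {φ φ' : ℝ → ℝ} {c : ℝ}
    (hφ : ∀ t, 0 ≤ t → HasDerivAt φ (φ' t) t) (hc : ∀ t, 0 ≤ t → φ' t ≤ -c * φ t)
    {t : ℝ} (ht : 0 ≤ t) : φ t ≤ φ 0 * exp (-c * t) := by
  have h := le_gronwallBound_of_liminf_deriv_right_le (a := 0) (b := t) (δ := φ 0) (K := -c)
    (ε := 0) (fun s hs => (hφ s hs.1).continuousAt.continuousWithinAt)
    (fun s hs _ hr => (hφ s hs.1).hasDerivWithinAt.liminf_right_slope_le hr) le_rfl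
    (fun s hs => by simpa using hc s hs.1) t ⟨ht, le_rfl⟩
  simpa [gronwallBound_ε0] using h

def sqSum (p : ℝ × ℝ × ℝ) : ℝ := p.1 ^ 2 + p.2.1 ^ 2 + p.2.2 ^ 2

theorem sq_norm_le_sqSum (p : ℝ × ℝ × ℝ) : ‖p‖ ^ 2 ≤ sqSum p := by
  simp only [Prod.norm_def, Real.norm_eq_abs, sqSum]
  rcases max_choice |p.1| (max |p.2.1| |p.2.2|) with h | h <;> rw [h]
  · nlinarith [sq_abs p.1, sq_nonneg p.2.1, sq_nonneg p.2.2]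
  rcases max_choice |p.2.1| |p.2.2| with h | h <;> rw [h]
  · nlinarith [sq_abs p.2.1, sq_nonneg p.1, sq_nonneg p.2.2]
  · nlinarith [sq_abs p.2.2, sq_nonneg p.1, sq_nonneg p.2.1]

theorem sqSum_le_three_mul_sq_norm (p : ℝ × ℝ × ℝ) : sqSum p ≤ 3 * ‖p‖ ^ 2 := by
  have h1 : |p.1| ≤ ‖p‖ := norm_fst_le p
  have h2 : |p.2.1| ≤ ‖p‖ := (norm_fst_le p.2).trans (norm_snd_le p)
  have h3 : |p.2.2| ≤ ‖p‖ := (norm_snd_le p.2).trans (norm_snd_le p)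
  simp only [sqSum, ← sq_abs p.1, ← sq_abs p.2.1, ← sq_abs p.2.2]
  nlinarith [abs_nonneg p.1, abs_nonneg p.2.1, abs_nonneg p.2.2]

theorem HasDerivAt.sqSum_comp {u : ℝ → ℝ × ℝ × ℝ} {v : ℝ × ℝ × ℝ} {t : ℝ}
    (hu : HasDerivAt u v t) :
    HasDerivAt (fun s => sqSum (u s))
      (2 * ((u t).1 * v.1 + (u t).2.1 * v.2.1 + (u t).2.2 * v.2.2)) t := by
  have h1 : HasDerivAt (fun s => (u s).1) v.1 t := hu.fst
  have h2 : HasDerivAt (fun s => (u s).2.1) v.2.1 t := hu.snd.fst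
  have h3 : HasDerivAt (fun s => (u s).2.2) v.2.2 t := hu.snd.snd
  refine (((h1.fun_pow 2).add (h2.fun_pow 2)).add (h3.fun_pow 2)).congr_deriv ?_
  push_cast
  ring

theorem two_mul_dot_mul_le {p q : ℝ × ℝ × ℝ} {k : ℝ} (hq : q ≤ (-k, -k, -k)) :
    2 * (p.1 * (p * q).1 + p.2.1 * (p * q).2.1 + p.2.2 * (p * q).2.2) ≤ -(2 * k) * sqSum p := by
  obtain ⟨h1, h2, h3⟩ := hq
  simp only [Prod.fst_mul, Prod.snd_mul, sqSum]
  nlinarith [mul_le_mul_of_nonneg_left h1 (sq_nonneg p.1),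
    mul_le_mul_of_nonneg_left h2 (sq_nonneg p.2.1), mul_le_mul_of_nonneg_left h3 (sq_nonneg p.2.2)]

theorem tendsto_zero_of_deriv_eq_mul_of_le_neg {q : ℝ × ℝ × ℝ → ℝ × ℝ × ℝ} {k r : ℝ}
    (hk : 0 < k) (hr : 0 < r) (hq : ∀ p : ℝ × ℝ × ℝ, ‖p‖ ≤ r → q p ≤ (-k, -k, -k))
    {u : ℝ → ℝ × ℝ × ℝ} (hu : ∀ t, 0 ≤ t → HasDerivAt u (u t * q (u t)) t)
    (hu0 : ‖u 0‖ < r / 2) : Tendsto u atTop (𝓝 0) := by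
  set φ : ℝ → ℝ := fun t => sqSum (u t)
  have hφ := fun t ht => (hu t ht).sqSum_comp
  have hdecay : ∀ t, φ t ≤ r ^ 2 → 2 * ((u t).1 * (u t * q (u t)).1 +
      (u t).2.1 * (u t * q (u t)).2.1 + (u t).2.2 * (u t * q (u t)).2.2) ≤ -(2 * k) * φ t := by
    refine fun t ht => two_mul_dot_mul_le (hq _ ?_)
    exact pow_le_pow_iff_left₀ (norm_nonneg _) hr.le two_ne_zero |>.mp
      ((sq_norm_le_sqSum _).trans ht)
  have h0 : φ 0 ≤ r ^ 2 :=
    (sqSum_le_three_mul_sq_norm _).trans (by nlinarith [norm_nonneg (u 0)])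
  have htrapped : ∀ t, 0 ≤ t → φ t ≤ r ^ 2 := fun t ht =>
    le_of_deriv_neg_of_eq hφ h0 (fun s _ hs => (hdecay s hs.le).trans_lt <| by
      simp only [φ, hs]; nlinarith [mul_pos hk (pow_pos hr 2)]) ht
  have hexp : ∀ t, 0 ≤ t → φ t ≤ φ 0 * exp (-(2 * k) * t) := fun t ht =>
    le_mul_exp_of_deriv_le_neg_mul hφ (fun s hs => hdecay s (htrapped s hs)) ht
  have hφlim : Tendsto φ atTop (𝓝 0) := by
    refine squeeze_zero' (.of_forall fun t => by simp only [φ, sqSum]; positivity)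
      ((eventually_ge_atTop 0).mono hexp) ?_
    simpa [neg_mul] using
      (tendsto_exp_neg_atTop_nhds_zero.comp (tendsto_id.const_mul_atTop (by positivity))).const_mul
        (φ 0)
  rw [tendsto_zero_iff_norm_tendsto_zero]
  refine squeeze_zero (fun t => norm_nonneg _) (fun t => ?_) (by simpa using hφlim.sqrt)
  exact Real.le_sqrt_of_sq_le (sq_norm_le_sqSum _)

def perCapitaRate (b β γ ε : ℝ) (p : ℝ × ℝ × ℝ) : ℝ × ℝ × ℝ :=
  ((1 - p.1) * (PiAP γ p.1 p.2.1 p.2.2 - ε) - p.2.1 * (PiNC p.1 p.2.1 - ε)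
      - p.2.2 * (PiD b β p.1 p.2.1 - ε),
    (1 - p.2.1) * (PiNC p.1 p.2.1 - ε) - p.1 * (PiAP γ p.1 p.2.1 p.2.2 - ε)
      - p.2.2 * (PiD b β p.1 p.2.1 - ε),
    (1 - p.2.2) * (PiD b β p.1 p.2.1 - ε) - p.2.1 * (PiNC p.1 p.2.1 - ε)
      - p.1 * (PiAP γ p.1 p.2.1 p.2.2 - ε))

theorem Fv_eq_mul_perCapitaRate (b β γ ε : ℝ) (p : ℝ × ℝ × ℝ) :
    Fv b β γ ε p = p * perCapitaRate b β γ ε p :=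
  rfl

theorem continuous_perCapitaRate (b β γ ε : ℝ) : Continuous (perCapitaRate b β γ ε) := by
  unfold perCapitaRate PiAP PiNC PiD
  fun_prop

theorem perCapitaRate_zero (b β γ ε : ℝ) : perCapitaRate b β γ ε 0 = (-ε, -ε, -ε) := by
  simp [perCapitaRate, PiAP, PiNC, PiD]

theorem exists_perCapitaRate_le (b β γ : ℝ) {ε : ℝ} (hε : 0 < ε) :
    ∃ r > 0, ∀ p : ℝ × ℝ × ℝ, ‖p‖ ≤ r →
      perCapitaRate b β γ ε p ≤ (-(ε / 2), -(ε / 2), -(ε / 2)) := by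
  have hc : Tendsto (perCapitaRate b β γ ε) (𝓝 0) (𝓝 (-ε, -ε, -ε)) :=
    perCapitaRate_zero b β γ ε ▸ (continuous_perCapitaRate b β γ ε).tendsto 0
  have hlt : -ε < -(ε / 2) := by linarith
  have hev : ∀ᶠ p in 𝓝 0, perCapitaRate b β γ ε p ≤ (-(ε / 2), -(ε / 2), -(ε / 2)) := by
    filter_upwards [hc.fst_nhds.eventually (eventually_le_nhds hlt),
      hc.snd_nhds.fst_nhds.eventually (eventually_le_nhds hlt),
      hc.snd_nhds.snd_nhds.eventually (eventually_le_nhds hlt)] with p h1 h2 h3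
    exact ⟨h1, h2, h3⟩
  obtain ⟨r, hr, hball⟩ := Metric.nhds_basis_closedBall.eventually_iff.mp hev
  exact ⟨r, hr, fun p hp => hball (by simpa using hp)⟩

theorem exit_equilibrium_locally_asymptotically_stable_general (b β γ ε : ℝ)
    (hε0 : 0 < ε) :
    ∃ δ > 0, ∀ u : ℝ → ℝ × ℝ × ℝ,
      (∀ t : ℝ, 0 ≤ t → HasDerivAt u (Fv b β γ ε (u t)) t) →
      ‖u 0‖ < δ →
      Filter.Tendsto u Filter.atTop (nhds ((0 : ℝ), (0 : ℝ), (0 : ℝ))) := by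
  obtain ⟨r, hr, hrate⟩ := exists_perCapitaRate_le b β γ hε0
  refine ⟨r / 2, by positivity, fun u hu hu0 => ?_⟩
  have hu' : ∀ t, 0 ≤ t → HasDerivAt u (u t * perCapitaRate b β γ ε (u t)) t := fun t ht =>
    Fv_eq_mul_perCapitaRate b β γ ε (u t) ▸ hu t ht
  exact tendsto_zero_of_deriv_eq_mul_of_le_neg (by positivity) hr hrate hu' hu0

/-- for `0 < ε < 1` the origin (the monomorphic exiter equilibrium)
is locally asymptotically stable for the reduced replicator system. -/
theorem exit_equilibrium_locally_asymptotically_stable (b β γ ε : ℝ)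
    (hb : 1 < b) (hβ : 0 < β) (hγ : 0 < γ) (hε0 : 0 < ε) (hε1 : ε < 1) :
    ∃ δ > 0, ∀ u : ℝ → ℝ × ℝ × ℝ,
      (∀ t : ℝ, 0 ≤ t → HasDerivAt u (Fv b β γ ε (u t)) t) →
      ‖u 0‖ < δ →
      Filter.Tendsto u Filter.atTop (nhds ((0 : ℝ), (0 : ℝ), (0 : ℝ))) :=
  exit_equilibrium_locally_asymptotically_stable_general b β γ ε hε0
end
end

section
/- The point K₆ = (0, ε, 0) (the mixed non-punishing-cooperator/exiter state, with w = 1 − ε) is an equilibrium of F, and charpoly(J(K₆)) = X · (X − ε(b − 1)) · (X − ε(1 − ε)); in particular, if 0 < ε < 1 then, since b > 1, J(K₆) has the positive real eigenvalue ε(b − 1), so K₆ is linearly unstable. -/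
noncomputable section

open Polynomial

/-! Since `f = x·(…)` and `h = z·(…)` and `x = z = 0` at `K₆`, the first row of the Jacobian there
vanishes and the third reduces to its diagonal entry `ε(b - 1)`; expanding along these rows
factors the characteristic polynomial into linear terms read off the diagonal. -/

theorem Fv_K6_eq_zero (b β γ ε : ℝ) : Fv b β γ ε (0, ε, 0) = (0, 0, 0) := by
  simp [Fv, fRep, gRep, hRep, PiAP, PiNC, PiD]

theorem Jac_K6 (b β γ ε : ℝ) : Jac b β γ ε (0, ε, 0) =
    !![0, 0, 0; ε * (1 - ε), ε * (1 - ε), -(ε ^ 2 * (b - 1)); 0, 0, ε * (b - 1)] := by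
  ext i j
  fin_cases i <;> fin_cases j <;>
    simp (disch := fun_prop) [Jac, pd1, pd2, pd3, fRep, gRep, hRep, PiAP, PiNC, PiD] <;>
    ring

theorem charpoly_fin_three_of_zero_entries {R : Type*} [CommRing R] (p q r s : R) :
    (!![0, 0, 0; p, q, r; 0, 0, s] : Matrix (Fin 3) (Fin 3) R).charpoly =
      X * (X - C q) * (X - C s) := by
  simp [Matrix.charpoly, Matrix.det_fin_three]

theorem K6_equilibrium_charpoly_unstable_general (b β γ ε : ℝ)
    (hb : 1 < b) :
    Fv b β γ ε (0, ε, 0) = (0, 0, 0) ∧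
    (Jac b β γ ε (0, ε, 0)).charpoly =
      X * (X - C (ε * (b - 1))) * (X - C (ε * (1 - ε))) ∧
    (0 < ε →
      0 < ε * (b - 1) ∧ ((Jac b β γ ε (0, ε, 0)).charpoly).IsRoot (ε * (b - 1))) := by
  have hcharpoly : (Jac b β γ ε (0, ε, 0)).charpoly =
      X * (X - C (ε * (b - 1))) * (X - C (ε * (1 - ε))) := by
    rw [Jac_K6, charpoly_fin_three_of_zero_entries, mul_right_comm]
  refine ⟨Fv_K6_eq_zero b β γ ε, hcharpoly, fun hε => ⟨mul_pos hε (sub_pos.mpr hb), ?_⟩⟩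
  simp [hcharpoly]

/-- the mixed non-punishing-cooperator/exiter state `K₆ = (0,ε,0)`. -/
theorem K6_equilibrium_charpoly_unstable (b β γ ε : ℝ)
    (hb : 1 < b) (hβ : 0 < β) (hγ : 0 < γ) (hε : ε < 1) :
    Fv b β γ ε (0, ε, 0) = (0, 0, 0) ∧
    (Jac b β γ ε (0, ε, 0)).charpoly =
      X * (X - C (ε * (b - 1))) * (X - C (ε * (1 - ε))) ∧
    (0 < ε →
      0 < ε * (b - 1) ∧ ((Jac b β γ ε (0, ε, 0)).charpoly).IsRoot (ε * (b - 1))) :=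
  K6_equilibrium_charpoly_unstable_general b β γ ε hb
end
end

section
/- For every real number x* the point K₇(x*) = (x*, 1 − x*, 0) (a mixed state of altruistic punishers and non-punishing cooperators) is an equilibrium of F, and charpoly(J(K₇(x*))) = X · (X − (ε − 1)) · (X − (b − 1 − β x*)). -/
/-! On the plane `z = 0` the field reduces to `f = x (1 - x - y) (x + y - ε)`,
`g = y (1 - x - y) (x + y - ε)`, `h = 0`, so the line `x + y = 1` consists of equilibria.
Since `1 - x - y` vanishes there, and `h` carries the factor `z`, each derivative needed is the
cofactor of a simple root. The Jacobian has bottom row `(0, 0, b - 1 - β x*)` and a rank-one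
upper-left block of trace `ε - 1`, whence the characteristic polynomial.
-/

noncomputable section

open Polynomial

lemma deriv_eq_of_eq_sub_mul {F G : ℝ → ℝ} {t₀ : ℝ} (hG : DifferentiableAt ℝ G t₀)
    (hF : ∀ t, F t = (t - t₀) * G t) : deriv F t₀ = G t₀ := by
  rw [funext hF]
  exact ((((hasDerivAt_id' t₀).sub_const t₀).mul hG.hasDerivAt).deriv).trans (by simp)

lemma Matrix.charpoly_fin_three_of_bottom_row {R : Type*} [CommRing R] (a b c d e f i : R) :
    (!![a, b, c; d, e, f; 0, 0, i]).charpoly =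
      (X ^ 2 - C (a + e) * X + C (a * e - b * d)) * (X - C i) := by
  simp [Matrix.charpoly, Matrix.det_fin_three, Matrix.charmatrix]
  ring

section K7

variable (b β γ ε xs : ℝ)

lemma Fv_K7_eq_zero : Fv b β γ ε (xs, 1 - xs, 0) = (0, 0, 0) := by
  simp only [Fv, fRep, gRep, hRep, PiAP, PiNC, PiD, Prod.mk.injEq]
  refine ⟨by ring, by ring, by ring⟩

lemma Jac_K7_eq : Jac b β γ ε (xs, 1 - xs, 0) =
    !![xs * (ε - 1), xs * (ε - 1), pd3 (fRep b β γ ε) (xs, 1 - xs, 0);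
       (1 - xs) * (ε - 1), (1 - xs) * (ε - 1), pd3 (gRep b β γ ε) (xs, 1 - xs, 0);
       0, 0, b - 1 - β * xs] := by
  have f_x : pd1 (fRep b β γ ε) (xs, 1 - xs, 0) = xs * (ε - 1) := by
    rw [pd1, deriv_eq_of_eq_sub_mul (G := fun x => -x * (x + 1 - xs - ε)) (by fun_prop)
      (fun x => by simp only [fRep, PiAP, PiNC, PiD]; ring)]
    ring
  have f_y : pd2 (fRep b β γ ε) (xs, 1 - xs, 0) = xs * (ε - 1) := by
    rw [pd2, deriv_eq_of_eq_sub_mul (G := fun y => -xs * (xs + y - ε)) (by fun_prop)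
      (fun y => by simp only [fRep, PiAP, PiNC, PiD]; ring)]
    ring
  have g_x : pd1 (gRep b β γ ε) (xs, 1 - xs, 0) = (1 - xs) * (ε - 1) := by
    rw [pd1, deriv_eq_of_eq_sub_mul (G := fun x => -(1 - xs) * (x + 1 - xs - ε)) (by fun_prop)
      (fun x => by simp only [gRep, PiAP, PiNC, PiD]; ring)]
    ring
  have g_y : pd2 (gRep b β γ ε) (xs, 1 - xs, 0) = (1 - xs) * (ε - 1) := by
    rw [pd2, deriv_eq_of_eq_sub_mul (G := fun y => -y * (xs + y - ε)) (by fun_prop)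
      (fun y => by simp only [gRep, PiAP, PiNC, PiD]; ring)]
    ring
  have h_x : pd1 (hRep b β γ ε) (xs, 1 - xs, 0) = 0 := by
    simp [pd1, hRep]
  have h_y : pd2 (hRep b β γ ε) (xs, 1 - xs, 0) = 0 := by
    simp [pd2, hRep]
  have h_z : pd3 (hRep b β γ ε) (xs, 1 - xs, 0) = b - 1 - β * xs := by
    rw [pd3, deriv_eq_of_eq_sub_mul
      (G := fun z => (1 - z) * (PiD b β xs (1 - xs) - ε) - (1 - xs) * (1 - ε) -
        xs * (1 - γ * z - ε)) (by fun_prop)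
      (fun z => by simp only [hRep, PiAP, PiNC, PiD]; ring)]
    simp only [PiD]
    ring
  rw [Jac, f_x, f_y, g_x, g_y, h_x, h_y, h_z]

end K7

theorem K7_equilibrium_charpoly_general (b β γ ε : ℝ) (xs : ℝ) :
    Fv b β γ ε (xs, 1 - xs, 0) = (0, 0, 0) ∧
    (Jac b β γ ε (xs, 1 - xs, 0)).charpoly =
      X * (X - C (ε - 1)) * (X - C (b - 1 - β * xs)) := by
  refine ⟨Fv_K7_eq_zero b β γ ε xs, ?_⟩
  rw [Jac_K7_eq, Matrix.charpoly_fin_three_of_bottom_row]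
  have trace : xs * (ε - 1) + (1 - xs) * (ε - 1) = ε - 1 := by ring
  have det : xs * (ε - 1) * ((1 - xs) * (ε - 1)) - xs * (ε - 1) * ((1 - xs) * (ε - 1)) = 0 :=
    sub_self _
  rw [trace, det, C_0]
  ring

/-- the line `K₇(x*) = (x*, 1 - x*, 0)` of mixed cooperator
equilibria and the characteristic polynomial of the Jacobian there. -/
theorem K7_equilibrium_charpoly (b β γ ε : ℝ)
    (hb : 1 < b) (hβ : 0 < β) (hγ : 0 < γ) (hε : ε < 1) (xs : ℝ) :
    Fv b β γ ε (xs, 1 - xs, 0) = (0, 0, 0) ∧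
    (Jac b β γ ε (xs, 1 - xs, 0)).charpoly =
      X * (X - C (ε - 1)) * (X - C (b - 1 - β * xs)) :=
  K7_equilibrium_charpoly_general b β γ ε xs
end
end

section
/- For x* ∈ ℝ consider the equilibrium K₇(x*) = (x*, 1 − x*, 0). If x* > (b − 1)/β, then (since ε < 1) the nonzero roots of charpoly(J(K₇(x*))) are ε − 1 < 0 and b − 1 − βx* < 0, i.e. J(K₇(x*)) has one zero eigenvalue and two negative real eigenvalues; whereas if x* < (b − 1)/β then J(K₇(x*)) has the positive real eigenvalue b − 1 − βx*, so K₇(x*) is linearly unstable. -/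
noncomputable section

open Polynomial

/-! On the face `z = 0` the field is `(x (1 - x - y)(x + y - ε), y (1 - x - y)(x + y - ε), 0)`
and `h` carries the factor `z`, so at `K₇(x*)` the Jacobian is block upper triangular. Since the
common factor `1 - x - y` vanishes there, only its gradient `(-1, -1)` survives, so the `2 × 2`
block has equal columns and eigenvalues `0` and its trace `ε - 1`; the third eigenvalue is
`∂h/∂z = Π_D - Π_NC = b - 1 - βx*`. -/

theorem Matrix.charpoly_fin_three_of_col_zero_eq_col_one {R : Type*} [CommRing R]
    (p q c d f : R) :
    (!![p, p, c; q, q, d; 0, 0, f]).charpoly = X * (X - C (p + q)) * (X - C f) := by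
  rw [Matrix.charpoly, Matrix.det_fin_three]
  simp only [Matrix.charmatrix_apply_eq, Matrix.charmatrix_apply_ne, Matrix.of_apply,
    Matrix.cons_val', Matrix.cons_val_zero, Matrix.cons_val_one, Matrix.cons_val,
    Matrix.cons_val_fin_one, ne_eq, Fin.reduceEq, not_false_eq_true, map_zero, map_add]
  ring

theorem Polynomial.isRoot_X_mul_X_sub_C_mul_X_sub_C {R : Type*} [CommRing R] [IsDomain R]
    (a c μ : R) : (X * (X - C a) * (X - C c)).IsRoot μ ↔ μ = 0 ∨ μ = a ∨ μ = c := by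
  simp only [IsRoot.def, eval_mul, eval_X, eval_sub, eval_C, mul_eq_zero, sub_eq_zero, or_assoc]

theorem Jac_K7 (b β γ ε x : ℝ) :
    Jac b β γ ε (x, 1 - x, 0) =
      !![(ε - 1) * x, (ε - 1) * x, x * (ε - γ + γ * x + β * x - b);
         (ε - 1) * (1 - x), (ε - 1) * (1 - x), (1 - x) * (ε + γ * x + β * x - b);
         0, 0, b - 1 - β * x] := by
  simp (disch := fun_prop) only [Jac, pd1, pd2, pd3, fRep, gRep, hRep, PiAP, PiNC, PiD,
    deriv_fun_mul, deriv_fun_sub, deriv_fun_add, deriv_const', deriv_id'', deriv_const_sub_id',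
    deriv_const_mul_id']
  ring_nf

theorem charpoly_Jac_K7 (b β γ ε x : ℝ) :
    (Jac b β γ ε (x, 1 - x, 0)).charpoly = X * (X - C (ε - 1)) * (X - C (b - 1 - β * x)) := by
  rw [Jac_K7, Matrix.charpoly_fin_three_of_col_zero_eq_col_one]
  ring_nf

theorem K7_eigenvalue_signs_general (b β γ ε : ℝ)
    (hβ : 0 < β) (hε : ε < 1) (xs : ℝ) :
    ((b - 1) / β < xs →
      ε - 1 < 0 ∧ b - 1 - β * xs < 0 ∧
      ∀ μ : ℝ, ((Jac b β γ ε (xs, 1 - xs, 0)).charpoly).IsRoot μ →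
        μ = 0 ∨ μ = ε - 1 ∨ μ = b - 1 - β * xs) ∧
    (xs < (b - 1) / β →
      0 < b - 1 - β * xs ∧
      ((Jac b β γ ε (xs, 1 - xs, 0)).charpoly).IsRoot (b - 1 - β * xs)) := by
  rw [charpoly_Jac_K7]
  refine ⟨fun hx => ?_, fun hx => ?_⟩
  · have := (div_lt_iff₀ hβ).mp hx
    exact ⟨by linarith, by linarith, fun μ => (isRoot_X_mul_X_sub_C_mul_X_sub_C _ _ μ).mp⟩
  · have := (lt_div_iff₀ hβ).mp hx
    exact ⟨by linarith, (isRoot_X_mul_X_sub_C_mul_X_sub_C _ _ _).mpr (.inr (.inr rfl))⟩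

/-- stability analysis of `K₇(x*) = (x*, 1 - x*, 0)` in terms of
the sign of `b - 1 - β x*`. -/
theorem K7_eigenvalue_signs (b β γ ε : ℝ)
    (hb : 1 < b) (hβ : 0 < β) (hγ : 0 < γ) (hε : ε < 1) (xs : ℝ) :
    ((b - 1) / β < xs →
      ε - 1 < 0 ∧ b - 1 - β * xs < 0 ∧
      ∀ μ : ℝ, ((Jac b β γ ε (xs, 1 - xs, 0)).charpoly).IsRoot μ →
        μ = 0 ∨ μ = ε - 1 ∨ μ = b - 1 - β * xs) ∧
    (xs < (b - 1) / β →
      0 < b - 1 - β * xs ∧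
      ((Jac b β γ ε (xs, 1 - xs, 0)).charpoly).IsRoot (b - 1 - β * xs)) :=
  K7_eigenvalue_signs_general b β γ ε hβ hε xs
end
end

section
/- At the special point K₉ = ((b − 1)/β, (1 − b + β)/β, 0) on the line of mixed cooperator equilibria (which exists in the simplex when b < 1 + β), the characteristic polynomial of the Jacobian satisfies charpoly(J(K₉)) = X² · (X − (ε − 1)); i.e. J(K₉) has the eigenvalue 0 with algebraic multiplicity two and the single negative real eigenvalue ε − 1. -/
noncomputable section

open Polynomial

/-! On the edge `z = 0`, `x + y = 1` the brackets of `f` and `g` vanish, so the first two rows of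
`J` are `x` resp. `y` times the gradient of the bracket, whose `x`- and `y`-derivatives both equal
`ε - 1` there. The first two columns of `J` therefore agree, and the factor `z` of `h` makes the
last row `(0, 0, Π_D - 1)`. So along the whole edge `J` has the eigenvalues `0`, `ε - 1` (the
trace of the upper-left block) and `Π_D - 1`, and `K₉` is the point of the edge where `Π_D = 1`. -/

theorem Matrix.charpoly_fin_three_of_col_eq_of_row_eq_zero {R : Type*} [CommRing R]
    (a c d e f : R) :
    (!![a, a, c; e, e, f; 0, 0, d]).charpoly = X * (X - C (a + e)) * (X - C d) := by
  simp only [charpoly, charmatrix, scalar_apply, RingHom.mapMatrix_apply, det_fin_three,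
    sub_apply, diagonal_apply_eq, map_apply, of_apply, cons_val', cons_val_zero, cons_val_fin_one,
    cons_val_one, cons_val, ne_eq, Fin.reduceEq, not_false_eq_true, diagonal_apply_ne, zero_sub,
    mul_neg, map_zero, sub_self, mul_zero, sub_zero, neg_mul, neg_neg, add_zero, map_add]
  ring

theorem Jac_eq (b β γ ε x y z : ℝ) :
    Jac b β γ ε (x, y, z) =
      !![(1 - x) * (PiAP γ x y z - ε) - y * (PiNC x y - ε) - z * (PiD b β x y - ε)
            + x * (1 - x - (PiAP γ x y z - ε) - y - z * (b - β)),
          x * (1 - x - (PiNC x y - ε) - y - z * b),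
          -x * ((1 - x) * γ + (PiD b β x y - ε));
         y * (1 - y - (PiAP γ x y z - ε) - x - z * (b - β)),
          (1 - y) * (PiNC x y - ε) - x * (PiAP γ x y z - ε) - z * (PiD b β x y - ε)
            + y * (1 - y - (PiNC x y - ε) - x - z * b),
          y * (x * γ - (PiD b β x y - ε));
         z * ((1 - z) * (b - β) - y - (PiAP γ x y z - ε) - x),
          z * ((1 - z) * b - (PiNC x y - ε) - y - x),
          (1 - z) * (PiD b β x y - ε) - y * (PiNC x y - ε) - x * (PiAP γ x y z - ε)
            + z * (x * γ - (PiD b β x y - ε))] := by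
  simp (disch := fun_prop) only [Jac, pd1, pd2, pd3, fRep, gRep, hRep, PiAP, PiNC, PiD,
    deriv_fun_mul, deriv_fun_sub, deriv_fun_add, deriv_const_sub_id, deriv_id'',
    deriv_const, deriv_const_mul_id, deriv_const_add_id]
  ring_nf

theorem Jac_edge (b β γ ε u : ℝ) :
    Jac b β γ ε (u, 1 - u, 0) =
      !![u * (ε - 1), u * (ε - 1), -u * ((1 - u) * γ + (PiD b β u (1 - u) - ε));
         (1 - u) * (ε - 1), (1 - u) * (ε - 1), (1 - u) * (u * γ - (PiD b β u (1 - u) - ε));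
         0, 0, PiD b β u (1 - u) - 1] := by
  rw [Jac_eq]
  simp only [PiAP, PiNC]
  ring_nf

theorem charpoly_Jac_edge (b β γ ε u : ℝ) :
    (Jac b β γ ε (u, 1 - u, 0)).charpoly =
      X * (X - C (ε - 1)) * (X - C (PiD b β u (1 - u) - 1)) := by
  rw [Jac_edge, Matrix.charpoly_fin_three_of_col_eq_of_row_eq_zero, ← add_mul, add_sub_cancel,
    one_mul]

theorem K9_charpoly_general (b β γ ε : ℝ) (hβ : 0 < β) :
    (Jac b β γ ε ((b - 1) / β, (1 - b + β) / β, 0)).charpoly =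
      X ^ 2 * (X - C (ε - 1)) := by
  have hy : (1 - b + β) / β = 1 - (b - 1) / β := by field_simp; ring
  have hD : PiD b β ((b - 1) / β) (1 - (b - 1) / β) = 1 := by
    unfold PiD; field_simp; ring
  rw [hy, charpoly_Jac_edge, hD, sub_self, map_zero, sub_zero]
  ring

/-- the special point `K₉ = ((b-1)/β, (1-b+β)/β, 0)` has
`charpoly(J(K₉)) = X² (X - (ε - 1))`. -/
theorem K9_charpoly (b β γ ε : ℝ)
    (hb : 1 < b) (hβ : 0 < β) (hγ : 0 < γ) (hε : ε < 1) :
    (Jac b β γ ε ((b - 1) / β, (1 - b + β) / β, 0)).charpoly =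
      X ^ 2 * (X - C (ε - 1)) :=
  K9_charpoly_general b β γ ε hβ
end
end

section
/- Assume b ≠ β. Then the point K₁₀ = (ε/(b − β), 0, ε(1 − b + β)/((b − β)γ)) (a mixed state of altruistic punishers, defectors and exiters, with w = 1 − ε(γ + 1 + β − b)/((b − β)γ)) is an equilibrium of F; moreover at K₁₀ the three payoffs of the strategies present are equal: Π_AP(K₁₀) = Π_D(K₁₀) = ε = Π_E. -/
noncomputable section

open Polynomial

section Equilibria

variable {b β γ ε : ℝ}

-- With y = 0 the factor y kills g, and every payoff difference left in f and h is zero.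
theorem Fv_eq_zero_of_payoffs_eq (x z : ℝ) (hAP : PiAP γ x 0 z = ε) (hD : PiD b β x 0 = ε) :
    Fv b β γ ε (x, 0, z) = (0, 0, 0) := by
  simp only [Fv, fRep, gRep, hRep, hAP, hD, Prod.mk.injEq]
  refine ⟨?_, ?_, ?_⟩ <;> ring

theorem PiD_div_sub_self (hbβ : b ≠ β) : PiD b β (ε / (b - β)) 0 = ε := by
  have : b - β ≠ 0 := sub_ne_zero.mpr hbβ
  unfold PiD
  field_simp
  ring

theorem PiAP_K10 (hbβ : b ≠ β) (hγ : γ ≠ 0) :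
    PiAP γ (ε / (b - β)) 0 (ε * (1 - b + β) / ((b - β) * γ)) = ε := by
  have : b - β ≠ 0 := sub_ne_zero.mpr hbβ
  unfold PiAP
  field_simp
  ring

end Equilibria

theorem K10_equilibrium_general (b β γ ε : ℝ)
    (hγ : 0 < γ) (hbβ : b ≠ β) :
    Fv b β γ ε (ε / (b - β), 0, ε * (1 - b + β) / ((b - β) * γ)) = (0, 0, 0) ∧
    PiAP γ (ε / (b - β)) 0 (ε * (1 - b + β) / ((b - β) * γ)) = ε ∧
    PiD b β (ε / (b - β)) 0 = ε := by
  have hAP := PiAP_K10 (ε := ε) hbβ hγ.ne'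
  have hD := PiD_div_sub_self (ε := ε) hbβ
  exact ⟨Fv_eq_zero_of_payoffs_eq _ _ hAP hD, hAP, hD⟩

/-- the mixed altruistic-punisher/defector/exiter state `K₁₀`
is an equilibrium, at which all strategies present earn payoff `ε`. -/
theorem K10_equilibrium (b β γ ε : ℝ)
    (hb : 1 < b) (hβ : 0 < β) (hγ : 0 < γ) (hε : ε < 1) (hbβ : b ≠ β) :
    Fv b β γ ε (ε / (b - β), 0, ε * (1 - b + β) / ((b - β) * γ)) = (0, 0, 0) ∧
    PiAP γ (ε / (b - β)) 0 (ε * (1 - b + β) / ((b - β) * γ)) = ε ∧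
    PiD b β (ε / (b - β)) 0 = ε :=
  K10_equilibrium_general b β γ ε hγ hbβ
end
end

section
/- Assume D := 1 − b + β + γ ≠ 0. Then the point K₁₂ = (γ/D, 0, (1 − b + β)/D) (a mixed state of altruistic punishers and defectors with no exiters, w = 0) is an equilibrium of F, and at K₁₂ the payoffs of the two strategies present are equal: Π_AP(K₁₂) = Π_D(K₁₂) = γ(b − β)/D. -/
noncomputable section

open Polynomial

/-- the mixed altruistic-punisher/defector state `K₁₂` (no
exiters) is an equilibrium, with equal payoffs `γ(b-β)/D` for the strategies
present, where `D = 1 - b + β + γ`. -/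
theorem K12_equilibrium (b β γ ε : ℝ)
    (hb : 1 < b) (hβ : 0 < β) (hγ : 0 < γ) (hε : ε < 1)
    (hD : 1 - b + β + γ ≠ 0) :
    Fv b β γ ε
        (γ / (1 - b + β + γ), 0, (1 - b + β) / (1 - b + β + γ)) = (0, 0, 0) ∧
    PiAP γ (γ / (1 - b + β + γ)) 0 ((1 - b + β) / (1 - b + β + γ)) =
      γ * (b - β) / (1 - b + β + γ) ∧
    PiD b β (γ / (1 - b + β + γ)) 0 = γ * (b - β) / (1 - b + β + γ) := by
  refine ⟨?_, ?_, ?_⟩ <;>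
    simp only [Fv, fRep, gRep, hRep, PiAP, PiNC, PiD, Prod.mk.injEq] <;>
    first
      | (constructor <;> [skip; constructor] <;> field_simp <;> ring)
      | (field_simp; ring)
end
end

section
/- Assume D := 1 − b + β + γ ≠ 0 and let K₁₂ = (γ/D, 0, (1 − b + β)/D). Then charpoly(J(K₁₂)) = (X − (1 − b + β)γ/D)² · (X − (ε + (β − b)γ/D)); in particular, if b < 1 + β (so that D > γ > 0 and K₁₂ lies in the simplex), the Jacobian J(K₁₂) has the positive real eigenvalue (1 − b + β)γ/D of algebraic multiplicity two, so K₁₂ is linearly unstable. -/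
noncomputable section

open Polynomial

lemma cubic_deriv (c3 c2 c1 c0 t : ℝ) :
    deriv (fun x => c3*x^3 + c2*x^2 + c1*x + c0) t = 3*c3*t^2 + 2*c2*t + c1 := by
  have h : HasDerivAt (fun x : ℝ => c3*x^3 + c2*x^2 + c1*x + c0)
      (c3*(↑3*t^(3-1)) + c2*(↑2*t^(2-1)) + c1*1 + 0) t :=
    ((((hasDerivAt_pow 3 t).const_mul c3).add
      ((hasDerivAt_pow 2 t).const_mul c2)).add ((hasDerivAt_id t).const_mul c1)).add
      (hasDerivAt_const t c0)
  rw [h.deriv]; norm_num; ring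

lemma charpoly_fin3 (a b c d e f g h i : ℝ) :
    (!![a,b,c;d,e,f;g,h,i]).charpoly =
      X^3 - C (a+e+i)*X^2 + C (a*e+a*i+e*i-b*d-c*g-f*h)*X
        - C (a*(e*i-f*h)-b*(d*i-f*g)+c*(d*h-e*g)) := by
  rw [Matrix.charpoly, Matrix.det_fin_three]
  simp [Matrix.charmatrix_apply_eq, Matrix.charmatrix_apply_ne]
  ring

lemma e11 (b β γ ε x z : ℝ) : pd1 (fRep b β γ ε) (x,0,z) =
    3*(-1)*x^2 + 2*(1+ε+γ*z+β*z-b*z)*x + (-ε+ε*z-γ*z) := by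
  show deriv (fun t => fRep b β γ ε t 0 z) x = _
  rw [show (fun t => fRep b β γ ε t 0 z)
      = (fun t : ℝ => (-1)*t^3 + (1+ε+γ*z+β*z-b*z)*t^2 + (-ε+ε*z-γ*z)*t + 0) from
    funext fun t => by simp only [fRep, PiAP, PiNC, PiD]; ring, cubic_deriv]

lemma e12 (b β γ ε x z : ℝ) : pd2 (fRep b β γ ε) (x,0,z) =
    x - 2*x^2 + ε*x - b*x*z := by
  show deriv (fun t => fRep b β γ ε x t z) 0 = _
  rw [show (fun t => fRep b β γ ε x t z)
      = (fun t : ℝ => 0*t^3 + (-x)*t^2 + (x - 2*x^2 + ε*x - b*x*z)*t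
          + (x^2 - x^3 - ε*x + ε*x*z + ε*x^2 - γ*x*z + γ*x^2*z + β*x^2*z - b*x^2*z)) from
    funext fun t => by simp only [fRep, PiAP, PiNC, PiD]; ring, cubic_deriv]
  ring

lemma e13 (b β γ ε x z : ℝ) : pd3 (fRep b β γ ε) (x,0,z) =
    ε*x - γ*x + γ*x^2 + β*x^2 - b*x^2 := by
  show deriv (fun t => fRep b β γ ε x 0 t) z = _
  rw [show (fun t => fRep b β γ ε x 0 t)
      = (fun t : ℝ => 0*t^3 + 0*t^2 + (ε*x - γ*x + γ*x^2 + β*x^2 - b*x^2)*t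
          + (x^2 - x^3 - ε*x + ε*x^2)) from
    funext fun t => by simp only [fRep, PiAP, PiNC, PiD]; ring, cubic_deriv]
  ring

lemma e21 (b β γ ε x z : ℝ) : pd1 (gRep b β γ ε) (x,0,z) = 0 := by
  show deriv (fun t => gRep b β γ ε t 0 z) x = _
  rw [show (fun t => gRep b β γ ε t 0 z) = (fun _ : ℝ => (0:ℝ)) from
    funext fun t => by simp only [gRep, PiAP, PiNC, PiD]; ring]
  simp

lemma e22 (b β γ ε x z : ℝ) : pd2 (gRep b β γ ε) (x,0,z) =
    x - x^2 - ε + ε*z + ε*x + γ*x*z + β*x*z - b*x*z := by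
  show deriv (fun t => gRep b β γ ε x t z) 0 = _
  rw [show (fun t => gRep b β γ ε x t z)
      = (fun t : ℝ => (-1)*t^3 + (1 - 2*x + ε - b*z)*t^2
          + (x - x^2 - ε + ε*z + ε*x + γ*x*z + β*x*z - b*x*z)*t + 0) from
    funext fun t => by simp only [gRep, PiAP, PiNC, PiD]; ring, cubic_deriv]
  ring

lemma e23 (b β γ ε x z : ℝ) : pd3 (gRep b β γ ε) (x,0,z) = 0 := by
  show deriv (fun t => gRep b β γ ε x 0 t) z = _
  rw [show (fun t => gRep b β γ ε x 0 t) = (fun _ : ℝ => (0:ℝ)) from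
    funext fun t => by simp only [gRep, PiAP, PiNC, PiD]; ring]
  simp

lemma e31 (b β γ ε x z : ℝ) : pd1 (hRep b β γ ε) (x,0,z) =
    2*(-z)*x + (ε*z + γ*z^2 - β*z + β*z^2 + b*z - b*z^2) := by
  show deriv (fun t => hRep b β γ ε t 0 z) x = _
  rw [show (fun t => hRep b β γ ε t 0 z)
      = (fun t : ℝ => 0*t^3 + (-z)*t^2 + (ε*z + γ*z^2 - β*z + β*z^2 + b*z - b*z^2)*t
          + (-ε*z + ε*z^2)) from
    funext fun t => by simp only [hRep, PiAP, PiNC, PiD]; ring, cubic_deriv]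
  ring

lemma e32 (b β γ ε x z : ℝ) : pd2 (hRep b β γ ε) (x,0,z) =
    -2*x*z + ε*z + b*z - b*z^2 := by
  show deriv (fun t => hRep b β γ ε x t z) 0 = _
  rw [show (fun t => hRep b β γ ε x t z)
      = (fun t : ℝ => 0*t^3 + (-z)*t^2 + (-2*x*z + ε*z + b*z - b*z^2)*t
          + (-x^2*z - ε*z + ε*z^2 + ε*x*z + γ*x*z^2 - β*x*z + β*x*z^2 + b*x*z - b*x*z^2)) from
    funext fun t => by simp only [hRep, PiAP, PiNC, PiD]; ring, cubic_deriv]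
  ring

lemma e33 (b β γ ε x z : ℝ) : pd3 (hRep b β γ ε) (x,0,z) =
    2*(ε + γ*x + β*x - b*x)*z + (-x^2 - ε + ε*x - β*x + b*x) := by
  show deriv (fun t => hRep b β γ ε x 0 t) z = _
  rw [show (fun t => hRep b β γ ε x 0 t)
      = (fun t : ℝ => 0*t^3 + (ε + γ*x + β*x - b*x)*t^2
          + (-x^2 - ε + ε*x - β*x + b*x)*t + 0) from
    funext fun t => by simp only [hRep, PiAP, PiNC, PiD]; ring, cubic_deriv]
  ring

lemma Jac_at (b β γ ε x z : ℝ) : Jac b β γ ε (x,0,z) =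
    !![3*(-1)*x^2 + 2*(1+ε+γ*z+β*z-b*z)*x + (-ε+ε*z-γ*z),
       x - 2*x^2 + ε*x - b*x*z,
       ε*x - γ*x + γ*x^2 + β*x^2 - b*x^2;
       0, x - x^2 - ε + ε*z + ε*x + γ*x*z + β*x*z - b*x*z, 0;
       2*(-z)*x + (ε*z + γ*z^2 - β*z + β*z^2 + b*z - b*z^2),
       -2*x*z + ε*z + b*z - b*z^2,
       2*(ε + γ*x + β*x - b*x)*z + (-x^2 - ε + ε*x - β*x + b*x)] := by
  rw [Jac, e11, e12, e13, e21, e22, e23, e31, e32, e33]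


lemma poly_step (a b01 c g2 e21 i2 r s : ℝ) (hA : a + i2 = r + s)
    (hB : a*i2 - c*g2 = r*s) :
    (X:ℝ[X])^3 - C (a + r + i2)*X^2
      + C (a*r + a*i2 + r*i2 - b01*0 - c*g2 - 0*e21)*X
      - C (a*(r*i2 - 0*e21) - b01*(0*i2 - 0*g2) + c*(0*e21 - r*g2))
      = (X - C r)^2*(X - C s) := by
  have hT : a + r + i2 = 2*r + s := by linear_combination hA
  have hS : a*r + a*i2 + r*i2 - b01*0 - c*g2 - 0*e21 = r^2 + 2*(r*s) := by
    linear_combination r*hA + hB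
  have hDt : a*(r*i2 - 0*e21) - b01*(0*i2 - 0*g2) + c*(0*e21 - r*g2) = r^2*s := by
    linear_combination r*hB
  rw [hT, hS, hDt]
  simp only [map_add, map_mul, map_pow, map_ofNat]
  ring

set_option maxHeartbeats 1600000 in
/-- the characteristic polynomial of the Jacobian at `K₁₂`;
for `b < 1 + β` the positive eigenvalue `(1-b+β)γ/D` has algebraic
multiplicity two, so `K₁₂` is linearly unstable. -/
theorem K12_charpoly_unstable (b β γ ε : ℝ)
    (hb : 1 < b) (hβ : 0 < β) (hγ : 0 < γ) (hε : ε < 1)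
    (hD : 1 - b + β + γ ≠ 0) :
    (Jac b β γ ε
        (γ / (1 - b + β + γ), 0, (1 - b + β) / (1 - b + β + γ))).charpoly =
      (X - C ((1 - b + β) * γ / (1 - b + β + γ))) ^ 2 *
        (X - C (ε + (β - b) * γ / (1 - b + β + γ))) ∧
    (b < 1 + β →
      0 < (1 - b + β) * γ / (1 - b + β + γ) ∧
      ((Jac b β γ ε
          (γ / (1 - b + β + γ), 0, (1 - b + β) / (1 - b + β + γ))).charpoly).IsRoot
        ((1 - b + β) * γ / (1 - b + β + γ)) ∧
      2 ≤ Polynomial.rootMultiplicity ((1 - b + β) * γ / (1 - b + β + γ))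
        (Jac b β γ ε
          (γ / (1 - b + β + γ), 0, (1 - b + β) / (1 - b + β + γ))).charpoly) := by
  have key : (Jac b β γ ε
      (γ / (1 - b + β + γ), 0, (1 - b + β) / (1 - b + β + γ))).charpoly =
      (X - C ((1 - b + β) * γ / (1 - b + β + γ))) ^ 2 *
        (X - C (ε + (β - b) * γ / (1 - b + β + γ))) := by
    rw [Jac_at, charpoly_fin3]
    set x := γ / (1 - b + β + γ) with hx
    set z := (1 - b + β) / (1 - b + β + γ) with hz
    have h00 : 3*(-1)*x^2 + 2*(1+ε+γ*z+β*z-b*z)*x + (-ε+ε*z-γ*z)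
        = γ*((1-b+β)^2 + ε*(1-b+β+γ) + (β-b)*γ)/(1-b+β+γ)^2 := by
      simp only [hx, hz]; field_simp; ring
    have h02 : ε*x - γ*x + γ*x^2 + β*x^2 - b*x^2
        = γ*(ε*(1-b+β+γ) - γ)/(1-b+β+γ)^2 := by
      simp only [hx, hz]; field_simp; ring
    have h11 : x - x^2 - ε + ε*z + ε*x + γ*x*z + β*x*z - b*x*z
        = (1-b+β)*γ/(1-b+β+γ) := by
      simp only [hx, hz]; field_simp; ring
    have h20 : 2*(-z)*x + (ε*z + γ*z^2 - β*z + β*z^2 + b*z - b*z^2)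
        = (1-b+β)*(ε*(1-b+β+γ) - γ)/(1-b+β+γ)^2 := by
      simp only [hx, hz]; field_simp; ring
    have h22 : 2*(ε + γ*x + β*x - b*x)*z + (-x^2 - ε + ε*x - β*x + b*x)
        = (1-b+β)*(ε*(1-b+β+γ) + (β-b)*γ + γ^2)/(1-b+β+γ)^2 := by
      simp only [hx, hz]; field_simp; ring
    rw [h00, h02, h11, h20, h22]
    have hA : γ*((1-b+β)^2 + ε*(1-b+β+γ) + (β-b)*γ)/(1-b+β+γ)^2
        + (1-b+β)*(ε*(1-b+β+γ) + (β-b)*γ + γ^2)/(1-b+β+γ)^2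
        = (1-b+β)*γ/(1-b+β+γ) + (ε + (β-b)*γ/(1-b+β+γ)) := by
      field_simp; ring
    have hB : γ*((1-b+β)^2 + ε*(1-b+β+γ) + (β-b)*γ)/(1-b+β+γ)^2
          * ((1-b+β)*(ε*(1-b+β+γ) + (β-b)*γ + γ^2)/(1-b+β+γ)^2)
        - γ*(ε*(1-b+β+γ) - γ)/(1-b+β+γ)^2
          * ((1-b+β)*(ε*(1-b+β+γ) - γ)/(1-b+β+γ)^2)
        = (1-b+β)*γ/(1-b+β+γ) * (ε + (β-b)*γ/(1-b+β+γ)) := by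
      field_simp; ring
    exact poly_step _ _ _ _ _ _ _ _ hA hB
  refine ⟨key, fun hb1 => ?_⟩
  have hnum : 0 < 1 - b + β := by linarith
  have hDpos : 0 < 1 - b + β + γ := by linarith
  have hrpos : 0 < (1 - b + β) * γ / (1 - b + β + γ) :=
    div_pos (mul_pos hnum hγ) hDpos
  refine ⟨hrpos, ?_, ?_⟩
  · rw [key]; simp [Polynomial.IsRoot]
  · rw [Polynomial.le_rootMultiplicity_iff (Matrix.charpoly_monic _).ne_zero, key]
    exact dvd_mul_right _ _
end
end
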